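/- Let E be a compact metric space and τ a finite Borel measure on E. For each ℓ ≥ 1 choose a compact Γ_ℓ ⊆ E with τ(E∖Γ_ℓ) ≤ ℓ/(e^{2ℓ²} − 1), and set K_ℓ := {ν ∈ M_+(E) : ν(E∖Γ_ℓ) ≤ 1/ℓ, ν(E) ≤ ℓ} and L_m := ∩_{ℓ≥m} K_ℓ. Then each L_m is compact in the weak topology on M_+(E), and if ζ_n = ρ_n^{-1} Σ_{ℓ=1}^{ρ_n} ζ^{(ℓ)} with (ζ^{(ℓ)}) i.i.d. Poisson random measures of intensity τ, then limsup_n (1/ρ_n) log P(ζ_n ∉ L_m) ≤ −(m − τ(E)(e − 1)); hence (ζ_n) is exponentially tight in M_+(E). -/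

import Mathlib

open MeasureTheory ProbabilityTheory Filter Real
open scoped NNReal ENNReal Nat Topology

/-!
Compactness: on `L_m` the total mass is at most `m` and `ν(Γ_ℓᶜ) ≤ 1/ℓ` along the compact sets
`Γ_ℓ`, `ℓ ≥ m`, so `L_m` is compact by Prokhorov's theorem.

Tail estimate: `ζ̄_r(A) = r⁻¹ ∑_{j<r} ζ_j(A)` is `r⁻¹` times a sum of `r` independent
Poisson(`τ(A)`) counts, whose exponential moment is `exp(r τ(A)(eᵗ - 1))`. Markov's inequality
with `t = 2ℓ²` and the assumption on `τ(Γ_ℓᶜ)` gives `P(ζ̄_r(Γ_ℓᶜ) > 1/ℓ) ≤ e^{-ℓr}`; with `t = 1`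
it gives `P(ζ̄_r(E) > ℓ) ≤ e^{(c₀-ℓ)r}`, where `c₀ = τ(E)(e - 1)`. Summing over `ℓ ≥ m` is a
geometric series of ratio `e^{-r} ≤ 1/2`, so `P(ζ̄_r ∉ L_m) ≤ 4 e^{(c₀-m)r}`.

Exponential tightness at speed `M` then follows by taking `K = L_m` with `m ≥ M + c₀`.
-/

set_option linter.deprecated false in
theorem toMeasure_poissonPMF (r : ℝ≥0) : (poissonPMF r).toMeasure = poissonMeasure r := by
  refine Measure.ext_iff_singleton.2 fun n => ?_
  rw [PMF.toMeasure_apply_singleton _ _ (measurableSet_singleton n), poissonMeasure_singleton]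
  rfl

theorem hasSum_poissonMeasure_exp_mul (r : ℝ≥0) (t : ℝ) :
    HasSum (fun n : ℕ => exp (-r) * r ^ n / n ! * exp (t * n)) (exp (r * (exp t - 1))) := by
  have h := (NormedSpace.expSeries_div_hasSum_exp ((r : ℝ) * exp t)).mul_left (exp (-r))
  rw [← exp_eq_exp_ℝ, ← exp_add, neg_add_eq_sub, ← mul_sub_one] at h
  have e : (fun n : ℕ => exp (-r) * r ^ n / n ! * exp (t * n)) =
      fun n : ℕ => exp (-r) * ((r * exp t) ^ n / n !) := by
    funext n
    rw [mul_comm t, exp_nat_mul, mul_pow]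
    ring
  rw [e]
  exact h

theorem integrable_exp_mul_poissonMeasure (r : ℝ≥0) (t : ℝ) :
    Integrable (fun n : ℕ => exp (t * n)) (poissonMeasure r) := by
  refine integrable_poissonMeasure_iff.2 ?_
  simpa only [norm_of_nonneg (exp_pos _).le] using (hasSum_poissonMeasure_exp_mul r t).summable

theorem mgf_poissonMeasure (r : ℝ≥0) (t : ℝ) :
    mgf (fun n : ℕ => (n : ℝ)) (poissonMeasure r) t = exp (r * (exp t - 1)) := by
  rw [mgf, integral_poissonMeasure' (integrable_exp_mul_poissonMeasure r t)]
  exact (hasSum_poissonMeasure_exp_mul r t).tsum_eq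

theorem ProbabilityTheory.iIndepFun.measureReal_sum_ge_le_of_poisson {Ω ι : Type*}
    [MeasurableSpace Ω] {P : Measure Ω} {X : ι → Ω → ℝ} (hind : iIndepFun X P)
    (hmeas : ∀ i, Measurable (X i)) {r : ℝ≥0}
    (hlaw : ∀ i, P.map (X i) = (poissonMeasure r).map (Nat.cast : ℕ → ℝ))
    (s : Finset ι) (c : ℝ) {t : ℝ} (ht : 0 ≤ t) :
    P.real {ω | c ≤ ∑ i ∈ s, X i ω} ≤ exp (-t * c + s.card * (r * (exp t - 1))) := by
  have := hind.isProbabilityMeasure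
  have hmgf : ∀ i, mgf (X i) P t = exp (r * (exp t - 1)) := fun i => by
    rw [← mgf_id_map (hmeas i).aemeasurable, hlaw i, mgf_id_map (by fun_prop)]
    exact mgf_poissonMeasure r t
  have hint : ∀ i, Integrable (fun ω => exp (t * X i ω)) P := fun i => by
    have : Integrable (fun x : ℝ => exp (t * x)) (P.map (X i)) := by
      rw [hlaw i, integrable_map_measure (by fun_prop) (by fun_prop)]
      exact integrable_exp_mul_poissonMeasure r t
    exact (integrable_map_measure (by fun_prop) (hmeas i).aemeasurable).1 this
  have hchernoff := measure_ge_le_exp_mul_mgf c ht (hind.integrable_exp_mul_sum hmeas (s := s)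
    fun i _ => hint i)
  rw [hind.mgf_sum hmeas, Finset.prod_congr rfl fun i _ => hmgf i, Finset.prod_const,
    ← exp_nat_mul, ← exp_add] at hchernoff
  simpa only [Finset.sum_apply] using hchernoff

theorem measureReal_iUnion_le_of_hasSum {α ι : Type*} [MeasurableSpace α] [Countable ι]
    {μ : Measure α} [IsFiniteMeasure μ] {s : ι → Set α} {f : ι → ℝ} {a : ℝ}
    (hs : ∀ i, μ.real (s i) ≤ f i) (hf : HasSum f a) : μ.real (⋃ i, s i) ≤ a := by
  have hf0 : ∀ i, 0 ≤ f i := fun i => measureReal_nonneg.trans (hs i)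
  refine ENNReal.toReal_le_of_le_ofReal (hf.nonneg hf0) ?_
  calc μ (⋃ i, s i) ≤ ∑' i, μ (s i) := measure_iUnion_le s
    _ ≤ ∑' i, ENNReal.ofReal (f i) := ENNReal.tsum_le_tsum fun i =>
        (ofReal_measureReal (measure_ne_top μ (s i))).symm.le.trans
          (ENNReal.ofReal_le_ofReal (hs i))
    _ = ENNReal.ofReal a := by rw [← ENNReal.ofReal_tsum_of_nonneg hf0 hf.summable, hf.tsum_eq]

theorem exp_neg_mul_le_half_pow (k : ℕ) {r : ℝ} (hr : 1 ≤ r) : exp (-(k * r)) ≤ (1 / 2) ^ k := by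
  have hexp : exp (-1) ≤ 1 / 2 := by
    rw [exp_neg, one_div]
    exact inv_anti₀ two_pos (by linarith [exp_one_gt_d9])
  calc exp (-(k * r)) ≤ exp (k * (-1)) :=
        exp_le_exp.2 (by nlinarith [(k.cast_nonneg : (0 : ℝ) ≤ k)])
    _ = exp (-1) ^ k := exp_nat_mul _ k
    _ ≤ (1 / 2) ^ k := pow_le_pow_left₀ (exp_pos _).le hexp k

section TightnessBound

variable {E : Type*} [MeasurableSpace E]

/-- `μ ∈ L_m = ⋂_{ℓ ≥ m} K_ℓ` in the notation of the paper. -/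
def TightnessBound (Γ : ℕ → Set E) (m : ℕ) (μ : Measure E) : Prop :=
  ∀ ℓ : ℕ, m ≤ ℓ → μ (Γ ℓ)ᶜ ≤ (ℓ : ℝ≥0∞)⁻¹ ∧ μ Set.univ ≤ ℓ

theorem TightnessBound.isFiniteMeasure {Γ : ℕ → Set E} {m : ℕ} {μ : Measure E}
    (h : TightnessBound Γ m μ) : IsFiniteMeasure μ :=
  ⟨(h m le_rfl).2.trans_lt (ENNReal.natCast_lt_top m)⟩

theorem isCompact_setOf_tightnessBound [MetricSpace E] [BorelSpace E] {Γ : ℕ → Set E} {m : ℕ}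
    (hm : 1 ≤ m) (hΓ : ∀ ℓ, m ≤ ℓ → IsCompact (Γ ℓ)) :
    IsCompact {ν : FiniteMeasure E | TightnessBound Γ m ν} := by
  have hu : Tendsto (fun n : ℕ => ((n + m : ℕ) : ℝ≥0)⁻¹) atTop (𝓝 0) :=
    tendsto_inv_atTop_zero.comp
      (tendsto_natCast_atTop_atTop.comp (tendsto_add_atTop_nat m))
  convert isCompact_setOfPred_finiteMeasure_mass_le_compl_isCompact_le (m : ℝ≥0) hu
    (fun n => hΓ (n + m) (Nat.le_add_left m n)) (Or.inl inferInstance) using 1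
  ext ν
  have hcoe : ∀ (s : Set E) (x : ℝ≥0), (ν : Measure E) s ≤ x ↔ ν s ≤ x := fun s x => by
    rw [← FiniteMeasure.ennreal_coeFn_eq_coeFn_toMeasure, ENNReal.coe_le_coe]
  have hinv : ∀ ℓ : ℕ, 1 ≤ ℓ → (ℓ : ℝ≥0∞)⁻¹ = ((ℓ : ℝ≥0)⁻¹ : ℝ≥0) := fun ℓ hℓ => by
    rw [ENNReal.coe_inv (by positivity), ENNReal.coe_natCast]
  simp only [Set.mem_ofPred_eq, TightnessBound, FiniteMeasure.mass]
  constructor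
  · intro h
    refine ⟨(hcoe _ _).1 (by exact_mod_cast (h m le_rfl).2), fun n => ?_⟩
    have := (h (n + m) (Nat.le_add_left m n)).1
    rwa [hinv _ (hm.trans (Nat.le_add_left m n)), hcoe] at this
  · rintro ⟨hmass, htail⟩ ℓ hℓ
    obtain ⟨n, rfl⟩ := Nat.exists_eq_add_of_le' hℓ
    refine ⟨?_, ?_⟩
    · rw [hinv _ (hm.trans hℓ), hcoe]
      exact htail n
    · have : (ν : Measure E) Set.univ ≤ m := by exact_mod_cast (hcoe _ _).2 hmass
      exact this.trans (by exact_mod_cast hℓ)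

end TightnessBound

section PoissonRandomMeasures

variable {E Ω : Type*} [MeasurableSpace E] {ζ : ℕ → Ω → Measure E} {N : ℕ → Set E → Ω → ℕ}
  {A : Set E}

noncomputable def empiricalMean (ζ : ℕ → Ω → Measure E) (r : ℕ) (ω : Ω) : Measure E :=
  (r : ℝ≥0∞)⁻¹ • ∑ j ∈ Finset.range r, ζ j ω

theorem empiricalMean_apply
    (hval : ∀ j A, MeasurableSet A → ∀ ω, ζ j ω A = N j A ω) (hA : MeasurableSet A)
    (r : ℕ) (ω : Ω) :
    empiricalMean ζ r ω A = (r : ℝ≥0∞)⁻¹ * ((∑ j ∈ Finset.range r, N j A ω : ℕ) : ℝ≥0∞) := by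
  simp only [empiricalMean, Measure.smul_apply, smul_eq_mul, Measure.finsetSum_apply,
    hval _ A hA, Nat.cast_sum]

theorem setOf_not_empiricalMean_le_subset
    (hval : ∀ j A, MeasurableSet A → ∀ ω, ζ j ω A = N j A ω) (hA : MeasurableSet A)
    {r : ℕ} (hr : r ≠ 0) {v : ℝ≥0∞} (hv : v ≠ ∞) :
    {ω | ¬ empiricalMean ζ r ω A ≤ v} ⊆
      {ω | r * v.toReal ≤ ∑ j ∈ Finset.range r, (N j A ω : ℝ)} := by
  intro ω hω
  rw [Set.mem_ofPred_eq, empiricalMean_apply hval hA, not_le, ← ENNReal.div_eq_inv_mul,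
    ENNReal.lt_div_iff_mul_lt (by simp [hr]) (by simp)] at hω
  have := (ENNReal.toReal_lt_toReal (by finiteness) (by simp)).2 hω
  rw [ENNReal.toReal_mul, ENNReal.toReal_natCast, ENNReal.toReal_natCast, mul_comm] at this
  exact_mod_cast this.le

variable [MeasurableSpace Ω]

structure IsIIDPoissonRandomMeasures (P : Measure Ω) (τ : Measure E) (ζ : ℕ → Ω → Measure E)
    (N : ℕ → Set E → Ω → ℕ) : Prop where
  apply_eq_count : ∀ j A, MeasurableSet A → ∀ ω, ζ j ω A = N j A ω
  measurable_count : ∀ j A, MeasurableSet A → Measurable (N j A)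
  map_count : ∀ j A, MeasurableSet A → P.map (N j A) = poissonMeasure (τ A).toNNReal
  indep : iIndepFun ζ P

namespace IsIIDPoissonRandomMeasures

variable {P : Measure Ω} {τ : Measure E}

theorem measureReal_sum_count_ge_le (h : IsIIDPoissonRandomMeasures P τ ζ N)
    (hA : MeasurableSet A) (r : ℕ) (c : ℝ) {t : ℝ} (ht : 0 ≤ t) :
    P.real {ω | c ≤ ∑ j ∈ Finset.range r, (N j A ω : ℝ)} ≤
      exp (-t * c + r * ((τ A).toReal * (exp t - 1))) := by
  have hind : iIndepFun (fun j ω => (N j A ω : ℝ)) P := by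
    convert h.indep.comp (fun _ μ => (μ A).toReal)
      fun _ => (Measure.measurable_coe hA).ennreal_toReal using 2 with j
    funext ω
    simp [h.apply_eq_count j A hA ω]
  have hcount : ∀ j, Measurable fun ω => (N j A ω : ℝ) := fun j =>
    measurable_from_top.comp (h.measurable_count j A hA)
  have hlaw : ∀ j, P.map (fun ω => (N j A ω : ℝ)) =
      (poissonMeasure (τ A).toNNReal).map (Nat.cast : ℕ → ℝ) := fun j => by
    change P.map (Nat.cast ∘ N j A) = _
    rw [← Measure.map_map measurable_from_top (h.measurable_count j A hA), h.map_count j A hA]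
  simpa [ENNReal.coe_toNNReal_eq_toReal] using
    hind.measureReal_sum_ge_le_of_poisson hcount hlaw (Finset.range r) c ht

theorem measureReal_not_empiricalMean_le_inv (h : IsIIDPoissonRandomMeasures P τ ζ N)
    (hA : MeasurableSet A) {ℓ : ℕ} (hℓ : 1 ≤ ℓ)
    (hτA : τ A ≤ ENNReal.ofReal ((ℓ : ℝ) / (exp (2 * (ℓ : ℝ) ^ 2) - 1))) {r : ℕ} (hr : r ≠ 0) :
    P.real {ω | ¬ empiricalMean ζ r ω A ≤ (ℓ : ℝ≥0∞)⁻¹} ≤ exp (-(ℓ * r)) := by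
  have := h.indep.isProbabilityMeasure
  have hℓ0 : (0 : ℝ) < ℓ := by exact_mod_cast hℓ
  have hX : 0 < exp (2 * (ℓ : ℝ) ^ 2) - 1 := sub_pos.2 (one_lt_exp_iff.2 (by positivity))
  have hτ : (τ A).toReal * (exp (2 * (ℓ : ℝ) ^ 2) - 1) ≤ ℓ :=
    (le_div_iff₀ hX).1 (ENNReal.toReal_le_of_le_ofReal (by positivity) hτA)
  calc P.real {ω | ¬ empiricalMean ζ r ω A ≤ (ℓ : ℝ≥0∞)⁻¹}
      ≤ P.real {ω | r * (ℓ : ℝ)⁻¹ ≤ ∑ j ∈ Finset.range r, (N j A ω : ℝ)} := by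
        simpa using measureReal_mono (μ := P) (setOf_not_empiricalMean_le_subset
          h.apply_eq_count hA hr (v := (ℓ : ℝ≥0∞)⁻¹) (by simpa using hℓ0.ne'))
    _ ≤ exp (-(2 * ℓ ^ 2) * (r * (ℓ : ℝ)⁻¹) + r * ((τ A).toReal * (exp (2 * ℓ ^ 2) - 1))) :=
        h.measureReal_sum_count_ge_le hA r _ (by positivity)
    _ ≤ exp (-(ℓ * r)) := by
        gcongr
        have hr0 : (0 : ℝ) ≤ r := r.cast_nonneg
        field_simp
        nlinarith

theorem measureReal_not_empiricalMean_le_natCast (h : IsIIDPoissonRandomMeasures P τ ζ N)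
    (hA : MeasurableSet A) (ℓ : ℕ) {r : ℕ} (hr : r ≠ 0) :
    P.real {ω | ¬ empiricalMean ζ r ω A ≤ ℓ} ≤ exp (((τ A).toReal * (exp 1 - 1) - ℓ) * r) := by
  have := h.indep.isProbabilityMeasure
  calc P.real {ω | ¬ empiricalMean ζ r ω A ≤ ℓ}
      ≤ P.real {ω | r * ℓ ≤ ∑ j ∈ Finset.range r, (N j A ω : ℝ)} := by
        simpa using measureReal_mono (μ := P)
          (setOf_not_empiricalMean_le_subset h.apply_eq_count hA hr (v := ℓ) (by simp))
    _ ≤ exp (-1 * (r * ℓ) + r * ((τ A).toReal * (exp 1 - 1))) :=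
        h.measureReal_sum_count_ge_le hA r _ zero_le_one
    _ = exp (((τ A).toReal * (exp 1 - 1) - ℓ) * r) := by ring_nf

theorem measureReal_empiricalMean_compl_or_univ_gt_le (h : IsIIDPoissonRandomMeasures P τ ζ N)
    {B : Set E} (hB : MeasurableSet B) {ℓ : ℕ} (hℓ : 1 ≤ ℓ)
    (hτB : τ Bᶜ ≤ ENNReal.ofReal ((ℓ : ℝ) / (exp (2 * (ℓ : ℝ) ^ 2) - 1))) {r : ℕ} (hr : r ≠ 0) :
    P.real ({ω | ¬ empiricalMean ζ r ω Bᶜ ≤ (ℓ : ℝ≥0∞)⁻¹} ∪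
      {ω | ¬ empiricalMean ζ r ω Set.univ ≤ ℓ}) ≤
        2 * exp (((τ Set.univ).toReal * (exp 1 - 1) - ℓ) * r) := by
  have := h.indep.isProbabilityMeasure
  have hc₀ : 0 ≤ (τ Set.univ).toReal * (exp 1 - 1) :=
    mul_nonneg ENNReal.toReal_nonneg (by linarith [add_one_le_exp 1])
  have hcompl : exp (-(ℓ * r)) ≤ exp (((τ Set.univ).toReal * (exp 1 - 1) - ℓ) * r) :=
    exp_le_exp.2 (by nlinarith [(r.cast_nonneg : (0 : ℝ) ≤ r)])
  calc _ ≤ exp (-(ℓ * r)) + exp (((τ Set.univ).toReal * (exp 1 - 1) - ℓ) * r) :=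
        (measureReal_union_le _ _).trans (add_le_add
          (h.measureReal_not_empiricalMean_le_inv hB.compl hℓ hτB hr)
          (h.measureReal_not_empiricalMean_le_natCast MeasurableSet.univ ℓ hr))
    _ ≤ _ := by linarith

theorem measureReal_not_tightnessBound_empiricalMean_le (h : IsIIDPoissonRandomMeasures P τ ζ N)
    {Γ : ℕ → Set E} {m : ℕ} (hm : 1 ≤ m) (hΓ : ∀ ℓ, m ≤ ℓ → MeasurableSet (Γ ℓ))
    (hΓτ : ∀ ℓ : ℕ, m ≤ ℓ →
      τ (Γ ℓ)ᶜ ≤ ENNReal.ofReal ((ℓ : ℝ) / (exp (2 * (ℓ : ℝ) ^ 2) - 1)))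
    {r : ℕ} (hr : 1 ≤ r) :
    P.real {ω | ¬ TightnessBound Γ m (empiricalMean ζ r ω)} ≤
      4 * exp (((τ Set.univ).toReal * (exp 1 - 1) - m) * r) := by
  have := h.indep.isProbabilityMeasure
  set c₀ := (τ Set.univ).toReal * (exp 1 - 1)
  have hsub : {ω | ¬ TightnessBound Γ m (empiricalMean ζ r ω)} ⊆ ⋃ k : ℕ,
      ({ω | ¬ empiricalMean ζ r ω (Γ (m + k))ᶜ ≤ ((m + k : ℕ) : ℝ≥0∞)⁻¹} ∪
        {ω | ¬ empiricalMean ζ r ω Set.univ ≤ (m + k : ℕ)}) := by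
    intro ω hω
    obtain ⟨ℓ, hℓ, hfail⟩ := not_forall₂.1 hω
    obtain ⟨k, rfl⟩ := Nat.exists_eq_add_of_le hℓ
    exact Set.mem_iUnion.2 ⟨k, not_and_or.1 hfail⟩
  have hterm (k : ℕ) :
      P.real ({ω | ¬ empiricalMean ζ r ω (Γ (m + k))ᶜ ≤ ((m + k : ℕ) : ℝ≥0∞)⁻¹} ∪
        {ω | ¬ empiricalMean ζ r ω Set.univ ≤ (m + k : ℕ)}) ≤
        2 * exp ((c₀ - m) * r) * (1 / 2) ^ k := by
    have hk := Nat.le_add_right m k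
    calc _ ≤ 2 * exp ((c₀ - (m + k : ℕ)) * r) :=
          h.measureReal_empiricalMean_compl_or_univ_gt_le (hΓ _ hk) (hm.trans hk) (hΓτ _ hk)
            (Nat.one_le_iff_ne_zero.1 hr)
      _ = 2 * exp ((c₀ - m) * r) * exp (-(k * r)) := by
          rw [mul_assoc, ← exp_add]
          push_cast
          ring_nf
      _ ≤ 2 * exp ((c₀ - m) * r) * (1 / 2) ^ k := by
          gcongr
          exact exp_neg_mul_le_half_pow k (by exact_mod_cast hr)
  calc _ ≤ 2 * exp ((c₀ - m) * r) * 2 :=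
        (measureReal_mono hsub).trans
          (measureReal_iUnion_le_of_hasSum hterm (hasSum_geometric_two.mul_left _))
    _ = 4 * exp ((c₀ - m) * r) := by ring

theorem eventually_measureReal_not_tightnessBound_empiricalMean_le
    (h : IsIIDPoissonRandomMeasures P τ ζ N)
    {Γ : ℕ → Set E} {m : ℕ} (hm : 1 ≤ m) (hΓ : ∀ ℓ, m ≤ ℓ → MeasurableSet (Γ ℓ))
    (hΓτ : ∀ ℓ : ℕ, m ≤ ℓ →
      τ (Γ ℓ)ᶜ ≤ ENNReal.ofReal ((ℓ : ℝ) / (exp (2 * (ℓ : ℝ) ^ 2) - 1)))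
    {ρ : ℕ → ℕ} (hρ : Tendsto (fun n => (ρ n : ℝ)) atTop atTop) {δ : ℝ} (hδ : 0 < δ) :
    ∀ᶠ n in atTop, P.real {ω | ¬ TightnessBound Γ m (empiricalMean ζ (ρ n) ω)} ≤
      exp ((-((m : ℝ) - (τ Set.univ).toReal * (exp 1 - 1)) + δ) * ρ n) := by
  filter_upwards [hρ.eventually_ge_atTop (max 1 (log 4 / δ))] with n hn
  have h4 : 4 ≤ exp (δ * ρ n) := by
    rw [← exp_log four_pos]
    exact exp_le_exp.2 ((div_le_iff₀' hδ).1 (le_of_max_le_right hn))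
  calc _ ≤ 4 * exp (((τ Set.univ).toReal * (exp 1 - 1) - m) * ρ n) :=
        h.measureReal_not_tightnessBound_empiricalMean_le hm hΓ hΓτ
          (by exact_mod_cast le_of_max_le_left hn)
    _ ≤ exp (δ * ρ n) * exp (((τ Set.univ).toReal * (exp 1 - 1) - m) * ρ n) := by gcongr
    _ = _ := by rw [← exp_add]; ring_nf

end IsIIDPoissonRandomMeasures

end PoissonRandomMeasures

theorem poisson_empirical_measure_exponential_tightness_general
    {E : Type*} [MetricSpace E] [MeasurableSpace E] [BorelSpace E]
    {Ω : Type*} [MeasurableSpace Ω] (P : Measure Ω)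
    (τ : Measure E)
    (Γ : ℕ → Set E)
    (hΓcpt : ∀ ℓ : ℕ, 1 ≤ ℓ → IsCompact (Γ ℓ))
    (hΓτ : ∀ ℓ : ℕ, 1 ≤ ℓ →
      τ (Γ ℓ)ᶜ ≤ ENNReal.ofReal ((ℓ : ℝ) / (Real.exp (2 * (ℓ : ℝ) ^ 2) - 1)))
    (ρ : ℕ → ℕ)
    (hρ : Tendsto (fun n => (ρ n : ℝ)) atTop atTop)
    (ζ : ℕ → Ω → Measure E) (N : ℕ → Set E → Ω → ℕ)
    (hval : ∀ (ℓ : ℕ) (A : Set E), MeasurableSet A → ∀ ω, ζ ℓ ω A = (N ℓ A ω : ℝ≥0∞))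
    (hmeas : ∀ (ℓ : ℕ) (A : Set E), MeasurableSet A → Measurable (N ℓ A))
    (hlaw : ∀ (ℓ : ℕ) (A : Set E), MeasurableSet A →
      Measure.map (N ℓ A) P = (poissonPMF (τ A).toNNReal).toMeasure)
    (hiid : iIndepFun ζ P) :
    (∀ m : ℕ, 1 ≤ m → IsCompact {ν : FiniteMeasure E |
        ∀ ℓ : ℕ, m ≤ ℓ →
          (ν : Measure E) (Γ ℓ)ᶜ ≤ ((ℓ : ℝ≥0∞))⁻¹ ∧
          (ν : Measure E) Set.univ ≤ (ℓ : ℝ≥0∞)}) ∧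
    (∀ m : ℕ, 1 ≤ m → ∀ δ : ℝ, 0 < δ → ∀ᶠ n : ℕ in atTop,
      (P {ω | ¬ (∀ ℓ : ℕ, m ≤ ℓ →
          ((ρ n : ℝ≥0∞)⁻¹ • ∑ j ∈ Finset.range (ρ n), ζ j ω) (Γ ℓ)ᶜ ≤ ((ℓ : ℝ≥0∞))⁻¹ ∧
          ((ρ n : ℝ≥0∞)⁻¹ • ∑ j ∈ Finset.range (ρ n), ζ j ω) Set.univ ≤ (ℓ : ℝ≥0∞))}).toReal
        ≤ Real.exp ((-((m : ℝ) - (τ Set.univ).toReal * (Real.exp 1 - 1)) + δ) * ρ n)) ∧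
    (∀ M : ℝ, ∃ K : Set (FiniteMeasure E), IsCompact K ∧
      ∀ δ : ℝ, 0 < δ → ∀ᶠ n : ℕ in atTop,
        (P {ω | ¬ ∃ ν ∈ K, (ν : Measure E)
            = (ρ n : ℝ≥0∞)⁻¹ • ∑ j ∈ Finset.range (ρ n), ζ j ω}).toReal
          ≤ Real.exp ((-M + δ) * ρ n)) := by
  have hpoisson : IsIIDPoissonRandomMeasures P τ ζ N :=
    ⟨hval, hmeas, fun j A hA => by rw [hlaw j A hA, toMeasure_poissonPMF], hiid⟩
  have := hiid.isProbabilityMeasure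
  have hcompact (m : ℕ) (hm : 1 ≤ m) :
      IsCompact {ν : FiniteMeasure E | TightnessBound Γ m ν} :=
    isCompact_setOf_tightnessBound hm fun ℓ hℓ => hΓcpt ℓ (hm.trans hℓ)
  have htail (m : ℕ) (hm : 1 ≤ m) (δ : ℝ) (hδ : 0 < δ) :=
    hpoisson.eventually_measureReal_not_tightnessBound_empiricalMean_le hm
      (fun ℓ hℓ => (hΓcpt ℓ (hm.trans hℓ)).measurableSet) (fun ℓ hℓ => hΓτ ℓ (hm.trans hℓ)) hρ hδ
  refine ⟨hcompact, htail, fun M => ?_⟩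
  obtain ⟨m, hm, hMm⟩ : ∃ m : ℕ, 1 ≤ m ∧ M + (τ Set.univ).toReal * (exp 1 - 1) ≤ m :=
    ⟨max 1 ⌈M + (τ Set.univ).toReal * (exp 1 - 1)⌉₊, le_max_left _ _,
      (Nat.le_ceil _).trans (by exact_mod_cast le_max_right _ _)⟩
  refine ⟨_, hcompact m hm, fun δ hδ => (htail m hm δ hδ).mono fun n hn => ?_⟩
  have hsub : {ω | ¬ ∃ ν ∈ {ν : FiniteMeasure E | TightnessBound Γ m ν},
      (ν : Measure E) = empiricalMean ζ (ρ n) ω} ⊆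
        {ω | ¬ TightnessBound Γ m (empiricalMean ζ (ρ n) ω)} :=
    fun ω hω h => hω ⟨⟨_, h.isFiniteMeasure⟩, h, rfl⟩
  refine (measureReal_mono hsub).trans (hn.trans (exp_le_exp.2 ?_))
  gcongr
  linarith

/-- Exponential tightness for empirical means of i.i.d. Poisson random measures.
Let `E` be a compact metric space, `τ` a finite Borel measure on `E`, and for each
`ℓ ≥ 1` let `Γ_ℓ ⊆ E` be compact with `τ(E∖Γ_ℓ) ≤ ℓ/(e^{2ℓ²} − 1)`. Set
`K_ℓ = {ν : ν(E∖Γ_ℓ) ≤ 1/ℓ, ν(E) ≤ ℓ}` and `L_m = ∩_{ℓ ≥ m} K_ℓ`. Then each `L_m` is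
compact in the weak topology on finite measures, and if
`ζ_n = ρ_n⁻¹ Σ_{ℓ < ρ_n} ζ^{(ℓ)}` with `(ζ^{(ℓ)})` i.i.d. Poisson random measures of
intensity `τ`, then `limsup_n (1/ρ_n) log P(ζ_n ∉ L_m) ≤ −(m − τ(E)(e − 1))` (stated
in eventual-exponential form); hence `(ζ_n)` is exponentially tight. -/
theorem poisson_empirical_measure_exponential_tightness
    {E : Type*} [MetricSpace E] [CompactSpace E] [MeasurableSpace E] [BorelSpace E]
    {Ω : Type*} [MeasurableSpace Ω] (P : Measure Ω) [IsProbabilityMeasure P]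
    (τ : Measure E) [IsFiniteMeasure τ]
    (Γ : ℕ → Set E)
    (hΓcpt : ∀ ℓ : ℕ, 1 ≤ ℓ → IsCompact (Γ ℓ))
    (hΓτ : ∀ ℓ : ℕ, 1 ≤ ℓ →
      τ (Γ ℓ)ᶜ ≤ ENNReal.ofReal ((ℓ : ℝ) / (Real.exp (2 * (ℓ : ℝ) ^ 2) - 1)))
    (ρ : ℕ → ℕ) (hρpos : ∀ n, 1 ≤ ρ n)
    (hρ : Tendsto (fun n => (ρ n : ℝ)) atTop atTop)
    (ζ : ℕ → Ω → Measure E) (N : ℕ → Set E → Ω → ℕ)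
    (hval : ∀ (ℓ : ℕ) (A : Set E), MeasurableSet A → ∀ ω, ζ ℓ ω A = (N ℓ A ω : ℝ≥0∞))
    (hmeas : ∀ (ℓ : ℕ) (A : Set E), MeasurableSet A → Measurable (N ℓ A))
    (hlaw : ∀ (ℓ : ℕ) (A : Set E), MeasurableSet A →
      Measure.map (N ℓ A) P = (poissonPMF (τ A).toNNReal).toMeasure)
    (hζmeas : ∀ ℓ, Measurable (ζ ℓ))
    (hiid : iIndepFun ζ P) :
    (∀ m : ℕ, 1 ≤ m → IsCompact {ν : FiniteMeasure E |
        ∀ ℓ : ℕ, m ≤ ℓ →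
          (ν : Measure E) (Γ ℓ)ᶜ ≤ ((ℓ : ℝ≥0∞))⁻¹ ∧
          (ν : Measure E) Set.univ ≤ (ℓ : ℝ≥0∞)}) ∧
    (∀ m : ℕ, 1 ≤ m → ∀ δ : ℝ, 0 < δ → ∀ᶠ n : ℕ in atTop,
      (P {ω | ¬ (∀ ℓ : ℕ, m ≤ ℓ →
          ((ρ n : ℝ≥0∞)⁻¹ • ∑ j ∈ Finset.range (ρ n), ζ j ω) (Γ ℓ)ᶜ ≤ ((ℓ : ℝ≥0∞))⁻¹ ∧
          ((ρ n : ℝ≥0∞)⁻¹ • ∑ j ∈ Finset.range (ρ n), ζ j ω) Set.univ ≤ (ℓ : ℝ≥0∞))}).toReal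
        ≤ Real.exp ((-((m : ℝ) - (τ Set.univ).toReal * (Real.exp 1 - 1)) + δ) * ρ n)) ∧
    (∀ M : ℝ, ∃ K : Set (FiniteMeasure E), IsCompact K ∧
      ∀ δ : ℝ, 0 < δ → ∀ᶠ n : ℕ in atTop,
        (P {ω | ¬ ∃ ν ∈ K, (ν : Measure E)
            = (ρ n : ℝ≥0∞)⁻¹ • ∑ j ∈ Finset.range (ρ n), ζ j ω}).toReal
          ≤ Real.exp ((-M + δ) * ρ n)) :=
  poisson_empirical_measure_exponential_tightness_general P τ Γ hΓcpt hΓτ ρ hρ ζ N hval hmeas hlaw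
    hiid
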